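/- arXiv:0812.0826 — 6 statements merged into one kernel-verified Lean document; each statement's English description precedes it below -/
import Mathlib

section
/- The sequences defined by T1(0)=k, T2(0)=k-1/2, T1(j)=T2(j-1)-1 for j≥1, and T2(j)=(T1(j)+T1(j-1))/2 for j≥1 satisfy the closed form T2(j) = k - (2/3)j - (5/18)(-1/2)^j - 2/9 for all j≥0. -/
/-- Closed form for `T2` in the coupled recurrence `T1 0 = k`, `T2 0 = k - 1/2`,
`T1 j = T2 (j-1) - 1`, `T2 j = (T1 j + T1 (j-1))/2` for `j ≥ 1`. -/
theorem T2_closed_form (k : ℚ) (T1 T2 : ℕ → ℚ)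
    (hT1_0 : T1 0 = k) (hT2_0 : T2 0 = k - 1/2)
    (hT1 : ∀ j : ℕ, 1 ≤ j → T1 j = T2 (j - 1) - 1)
    (hT2 : ∀ j : ℕ, 1 ≤ j → T2 j = (T1 j + T1 (j - 1)) / 2) :
    ∀ j : ℕ, T2 j = k - (2/3) * j - (5/18) * (-1/2 : ℚ) ^ j - 2/9 := by
  intro j
  induction j using Nat.strong_induction_on with
  | _ j ih =>
    match j with
    | 0 => simp [hT2_0]; ring
    | 1 =>
      rw [hT2 1 (by norm_num)]
      simp only [Nat.sub_self]
      rw [hT1 1 (by norm_num)]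
      simp [hT2_0, hT1_0]
      ring
    | (n+2) =>
      have h1 := hT2 (n+2) (by omega)
      have h2 := hT1 (n+2) (by omega)
      have h3 := hT1 (n+1) (by omega)
      have e : n+2-1 = n+1 := rfl
      rw [e] at h1 h2
      simp only [Nat.add_sub_cancel] at h3
      rw [h1, h2, h3, ih (n+1) (by omega), ih n (by omega)]
      push_cast
      ring_nf
end

section
/- With T1 as in the coupled recurrence, for all j ≥ 1 one has T1(j-1) + 2·T1(j) = 3k - 2j - 1. -/
/-- Row-sum identity: with `T1` as in the coupled recurrence,
`T1 (j-1) + 2 * T1 j = 3k - 2j - 1` for all `j ≥ 1`. -/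
theorem rowSum_identity' (k : ℚ) (T1 T2 : ℕ → ℚ)
    (hT1_0 : T1 0 = k) (hT2_0 : T2 0 = k - 1/2)
    (hT1 : ∀ j : ℕ, 1 ≤ j → T1 j = T2 (j - 1) - 1)
    (hT2 : ∀ j : ℕ, 1 ≤ j → T2 j = (T1 j + T1 (j - 1)) / 2) :
    ∀ j : ℕ, 1 ≤ j → T1 (j - 1) + 2 * T1 j = 3 * k - 2 * j - 1 := by
  intro j hj
  induction j, hj using Nat.le_induction with
  | base =>
    rw [hT1 1 le_rfl]
    simp [hT2_0, hT1_0]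
    ring
  | succ n hn ih =>
    have h1 : T1 (n + 1) = T2 n - 1 := by
      have := hT1 (n + 1) (by omega); simpa using this
    have h2 : T2 n = (T1 n + T1 (n - 1)) / 2 := hT2 n hn
    have : (n + 1 : ℕ) - 1 = n := by omega
    rw [this, h1, h2]
    push_cast
    linarith [ih]
end

section
/- Let P ⊂ ℚ^m be a rational polytope and let S be the graded semigroup of pairs (N, x) with N a nonnegative integer and x an integer point of the dilate N·P. If v is a vertex of P whose denominator is d > 1 (d the least positive integer with d·v ∈ ℤ^m), then the element (d, d·v) of S cannot be written as a sum of two nonzero elements of S; i.e., it is an essential generator of S. -/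
/-!
If `(d, d • v) = (N₁, x₁) + (N₂, x₂)` with both summands nonzero, then `N₁, N₂ > 0` and
`x₁ = N₁ • p₁`, `x₂ = N₂ • p₂` with `p₁, p₂ ∈ P`, so `v = (N₁ / d) • p₁ + (N₂ / d) • p₂` lies in
the open segment `(p₁, p₂)`. As `v` is an extreme point, `p₁ = v`; hence `N₁ • v = x₁` is
integral although `0 < N₁ < d`, contradicting the minimality of the denominator `d`.
-/

/-- An integer point `x ∈ ℤ^m` lying over the `N`-th dilate of `P ⊆ ℚ^m`. -/
def inDilate {m : ℕ} (P : Set (Fin m → ℚ)) (N : ℕ) (x : Fin m → ℤ) : Prop :=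
  ∃ p ∈ P, (fun i => (x i : ℚ)) = (N : ℚ) • p

section Convex

variable {𝕜 E : Type*} [Field 𝕜] [LinearOrder 𝕜] [IsStrictOrderedRing 𝕜]
  [AddCommGroup E] [Module 𝕜 E] {P : Set E} {v x y : E}

theorem mem_openSegment_of_add_smul_eq_smul_add_smul {a b : 𝕜} (ha : 0 < a) (hb : 0 < b)
    (h : (a + b) • v = a • x + b • y) : v ∈ openSegment 𝕜 x y := by
  refine mem_openSegment_iff_div.2 ⟨a, b, ha, hb, ?_⟩
  rw [div_eq_inv_mul, div_eq_inv_mul, mul_smul, mul_smul, ← smul_add, ← h, smul_smul,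
    inv_mul_cancel₀ (add_pos ha hb).ne', one_smul]

theorem Convex.mem_extremePoints_of_forall_add_sub_mem (hP : Convex 𝕜 P) (hv : v ∈ P)
    (hvert : ∀ ε, v + ε ∈ P → v - ε ∈ P → ε = 0) : v ∈ P.extremePoints 𝕜 := by
  refine mem_extremePoints_iff_left.2 ⟨hv, ?_⟩
  rintro x hx y hy ⟨a, b, ha, hb, hab, rfl⟩
  -- moving by `t = min a b` along `x - y` in either direction stays inside the segment `[x, y]`
  set t := min a b
  have ht : 0 < t := lt_min ha hb
  have hta : t ≤ a := min_le_left a b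
  have htb : t ≤ b := min_le_right a b
  have hplus : a • x + b • y + t • (x - y) ∈ P := by
    convert hP hx hy (by linarith : 0 ≤ a + t) (by linarith : 0 ≤ b - t) (by linarith)
      using 1
    module
  have hminus : a • x + b • y - t • (x - y) ∈ P := by
    convert hP hx hy (by linarith : 0 ≤ a - t) (by linarith : 0 ≤ b + t) (by linarith)
      using 1
    module
  have hxy : x = y := by
    have := hvert _ hplus hminus
    rwa [smul_eq_zero, or_iff_right ht.ne', sub_eq_zero] at this
  subst hxy
  rw [← add_smul, hab, one_smul]

end Convex

theorem inDilate.pos {m : ℕ} {P : Set (Fin m → ℚ)} {N : ℕ} {x : Fin m → ℤ}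
    (h : inDilate P N x) (hne : (N, x) ≠ (0, 0)) : 0 < N := by
  obtain ⟨p, -, hx⟩ := h
  refine Nat.pos_of_ne_zero fun hN => hne ?_
  subst hN
  ext i
  · rfl
  · simpa using congrFun hx i

theorem vertex_essential_generator_general {m : ℕ} (P : Set (Fin m → ℚ)) (hP : Convex ℚ P)
    (v : Fin m → ℚ) (hv : v ∈ P)
    (hvert : ∀ ε : Fin m → ℚ, v + ε ∈ P → v - ε ∈ P → ε = 0)
    (d : ℕ) (w : Fin m → ℤ) (hw : ∀ i, (w i : ℚ) = (d : ℚ) * v i)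
    (hdmin : ∀ d' : ℕ, 0 < d' → (∀ i, ∃ z : ℤ, (d' : ℚ) * v i = z) → d ≤ d') :
    ¬ ∃ (N₁ N₂ : ℕ) (x₁ x₂ : Fin m → ℤ),
        inDilate P N₁ x₁ ∧ inDilate P N₂ x₂ ∧
        (N₁, x₁) ≠ ((0 : ℕ), (0 : Fin m → ℤ)) ∧
        (N₂, x₂) ≠ ((0 : ℕ), (0 : Fin m → ℤ)) ∧
        N₁ + N₂ = d ∧ x₁ + x₂ = w := by
  rintro ⟨N₁, N₂, x₁, x₂, h₁, h₂, hne₁, hne₂, rfl, rfl⟩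
  have hN₁ := h₁.pos hne₁
  have hN₂ := h₂.pos hne₂
  obtain ⟨p₁, hp₁, hx₁⟩ := h₁
  obtain ⟨p₂, hp₂, hx₂⟩ := h₂
  have hsum : ((N₁ : ℚ) + N₂) • v = (N₁ : ℚ) • p₁ + (N₂ : ℚ) • p₂ := by
    rw [← hx₁, ← hx₂]
    funext i
    simpa [mul_comm] using (hw i).symm
  have hseg : v ∈ openSegment ℚ p₁ p₂ :=
    mem_openSegment_of_add_smul_eq_smul_add_smul (by exact_mod_cast hN₁) (by exact_mod_cast hN₂)
      hsum
  have hp₁v : p₁ = v := (hP.mem_extremePoints_of_forall_add_sub_mem hv hvert).2 hp₁ hp₂ hseg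
  have hle := hdmin N₁ hN₁ fun i => ⟨x₁ i, by simpa [hp₁v] using (congrFun hx₁ i).symm⟩
  omega

/-- If `v` is a vertex of a convex (rational) polytope `P ⊆ ℚ^m` with denominator
`d > 1` (the least positive integer with `d • v` integral), then the element
`(d, d • v)` of the graded semigroup `S = {(N, x) ∈ ℕ × ℤ^m : x ∈ N·P}` is an
essential generator: it is not the sum of two nonzero elements of `S`. -/
theorem vertex_essential_generator {m : ℕ} (P : Set (Fin m → ℚ)) (hP : Convex ℚ P)
    (v : Fin m → ℚ) (hv : v ∈ P)
    (hvert : ∀ ε : Fin m → ℚ, v + ε ∈ P → v - ε ∈ P → ε = 0)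
    (d : ℕ) (hd1 : 1 < d) (w : Fin m → ℤ) (hw : ∀ i, (w i : ℚ) = (d : ℚ) * v i)
    (hdmin : ∀ d' : ℕ, 0 < d' → (∀ i, ∃ z : ℤ, (d' : ℚ) * v i = z) → d ≤ d') :
    ¬ ∃ (N₁ N₂ : ℕ) (x₁ x₂ : Fin m → ℤ),
        inDilate P N₁ x₁ ∧ inDilate P N₂ x₂ ∧
        (N₁, x₁) ≠ ((0 : ℕ), (0 : Fin m → ℤ)) ∧
        (N₂, x₂) ≠ ((0 : ℕ), (0 : Fin m → ℤ)) ∧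
        N₁ + N₂ = d ∧ x₁ + x₂ = w :=
  vertex_essential_generator_general P hP v hv hvert d w hw hdmin
end

section
/- Let A be an ℕ-graded Noetherian ring with A₀ = k a field, let f₁,…,f_s ∈ A₁ be a homogeneous system of parameters (so A is a finitely generated free module over S = k[f₁,…,f_s] with homogeneous basis y₁,…,y_m), and suppose the Hilbert series H(A;t) has negative degree as a rational function. Then max_j deg y_j < s; in particular A is generated as a k-algebra in degrees < s = Krull dim A. -/
/-!
The products `f^α y_j` form a homogeneous `k`-basis of `A`, of degrees `|α| + deg y_j`, so
`H(A;t) = r(t) / (1 - t)^s` with `r = ∑ⱼ t^(deg y_j)`. If also `H(A;t) = p / q` with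
`deg p < deg q`, then `r q = p (1 - t)^s`, and comparing degrees gives
`max_j deg y_j = deg r = deg p + s - deg q < s`.
-/

open DirectSum Module

section GradedBasis

variable {R M σ ι : Type*} [Ring R] [AddCommGroup M] [Module R M] [DecidableEq ι]
  (𝒜 : ι → Submodule R M) [Decomposition 𝒜] (v : Basis σ R M) {g : σ → ι}

theorem span_basis_fiber_eq_of_mem (hv : ∀ i, v i ∈ 𝒜 (g i)) (d : ι) :
    Submodule.span R (Set.range fun i : {i // g i = d} => v i) = 𝒜 d := by
  refine le_antisymm (Submodule.span_le.mpr ?_) fun x hx => ?_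
  · rintro _ ⟨⟨i, rfl⟩, rfl⟩
    exact hv i
  have hcomp : ∀ y : M, (decompose 𝒜 y d : M) ∈
      Submodule.span R (Set.range fun i : {i // g i = d} => v i) := by
    intro y
    induction v.mem_span y using Submodule.span_induction with
    | mem _ hy =>
      obtain ⟨i, rfl⟩ := hy
      by_cases hi : g i = d
      · rw [decompose_of_mem_same 𝒜 (hi ▸ hv i)]
        exact Submodule.subset_span ⟨⟨i, hi⟩, rfl⟩
      · rw [decompose_of_mem_ne 𝒜 (hv i) hi]
        exact Submodule.zero_mem _
    | zero => simp
    | add y z _ _ hy hz => simpa using Submodule.add_mem _ hy hz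
    | smul a y _ hy =>
      rw [decompose_smul, DirectSum.smul_apply, Submodule.coe_smul]
      exact Submodule.smul_mem _ a hy
  simpa [decompose_of_mem_same 𝒜 hx] using hcomp x

theorem finrank_eq_natCard_of_basis_mem [StrongRankCondition R] (hv : ∀ i, v i ∈ 𝒜 (g i))
    (d : ι) : finrank R (𝒜 d) = Nat.card {i // g i = d} := by
  have hli : LinearIndependent R fun i : {i // g i = d} => v i :=
    v.linearIndependent.comp _ Subtype.val_injective
  rw [← span_basis_fiber_eq_of_mem 𝒜 v hv d, finrank_eq_nat_card_basis (Basis.span hli)]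

end GradedBasis

theorem Finsupp.prod_pow_mem_graded_degree {A S σ : Type*} [CommRing A] [SetLike S A]
    (𝒜 : ℕ → S) [SetLike.GradedMonoid 𝒜] {f : σ → A} (hf : ∀ i, f i ∈ 𝒜 1)
    (α : σ →₀ ℕ) :
    (α.prod fun i e => f i ^ e) ∈ 𝒜 α.degree := by
  simpa [Finsupp.degree_apply, Finsupp.prod] using
    SetLike.prod_pow_mem_graded 𝒜 (fun _ => 1) f α (F := α.support) fun i _ => hf i

theorem AlgebraicIndependent.exists_basis_mem_graded {k A σ ι : Type*} [Field k] [CommRing A]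
    [Algebra k A] (𝒜 : ℕ → Submodule k A) [GradedAlgebra 𝒜] {f : σ → A}
    (hind : AlgebraicIndependent k f) (hf : ∀ i, f i ∈ 𝒜 1)
    (b : Basis ι (Algebra.adjoin k (Set.range f)) A) {D : ι → ℕ}
    (hb : ∀ j, (b j : A) ∈ 𝒜 (D j)) :
    ∃ B : Basis ((σ →₀ ℕ) × ι) k A, ∀ p, B p ∈ 𝒜 (p.1.degree + D p.2) := by
  let bS := (MvPolynomial.basisMonomials σ k).map hind.aevalEquiv.toLinearEquiv
  refine ⟨bS.smulTower b, fun ⟨α, j⟩ => ?_⟩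
  have hα : algebraMap _ A (bS α) = α.prod fun i e => f i ^ e := by
    simp [bS, MvPolynomial.aeval_monomial]
  rw [Basis.smulTower_apply, Algebra.smul_def, hα]
  exact SetLike.mul_mem_graded (Finsupp.prod_pow_mem_graded_degree 𝒜 hf α) (hb j)

open PowerSeries

theorem PowerSeries.coeff_invOneSubPow_val (S : Type*) [CommRing S] (s n : ℕ) :
    coeff n (invOneSubPow S s).val = (s + n - 1).choose n := by
  cases s with
  | zero => cases n <;> simp [invOneSubPow_zero, coeff_one]
  | succ s =>
    rw [invOneSubPow_val_succ_eq_mk_add_choose, coeff_mk, Nat.add_right_comm,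
      Nat.add_sub_cancel, Nat.choose_symm_add]

theorem Finsupp.natCard_degree_eq (σ : Type*) [Fintype σ] (n : ℕ) :
    Nat.card {α : σ →₀ ℕ // α.degree = n} = (Fintype.card σ + n - 1).choose n := by
  classical
  rw [← Finset.card_univ, ← Finset.card_finsuppAntidiag_nat_eq_choose,
    ← Nat.card_eq_finsetCard]
  exact Nat.card_congr (Equiv.subtypeEquivRight fun α => by
    simp [Finset.mem_finsuppAntidiag, Finsupp.degree_eq_sum])

theorem Finsupp.finite_degree_add_eq (σ : Type*) [Finite σ] (e d : ℕ) :
    Finite {α : σ →₀ ℕ // α.degree + e = d} :=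
  ((Finsupp.finite_of_degree_le d).subset fun α (hα : α.degree + e = d) =>
    show α.degree ≤ d by omega).to_subtype

theorem PowerSeries.coeff_X_pow_mul_invOneSubPow_val (S : Type*) [CommRing S] (s e d : ℕ) :
    coeff d (X ^ e * (invOneSubPow S s).val : S⟦X⟧) =
      Nat.card {α : Fin s →₀ ℕ // α.degree + e = d} := by
  rw [coeff_X_pow_mul']
  split_ifs with h
  · rw [coeff_invOneSubPow_val,
      Nat.card_congr <| Equiv.subtypeEquivRight (q := fun α => α.degree = d - e) fun α => by
        omega,
      Finsupp.natCard_degree_eq, Fintype.card_fin]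
  · have : IsEmpty {α : Fin s →₀ ℕ // α.degree + e = d} :=
      ⟨fun ⟨α, hα⟩ => h (by omega)⟩
    simp

theorem PowerSeries.mk_natCard_degree_add_eq_sum_mul_invOneSubPow {ι : Type*} [Fintype ι]
    (S : Type*) [CommRing S] (s : ℕ) (D : ι → ℕ) :
    mk (fun d => (Nat.card {p : (Fin s →₀ ℕ) × ι // p.1.degree + D p.2 = d} : S)) =
      (∑ j, X ^ D j) * (invOneSubPow S s).val := by
  ext d
  have hsplit : Nat.card {p : (Fin s →₀ ℕ) × ι // p.1.degree + D p.2 = d} =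
      ∑ j, Nat.card {α : Fin s →₀ ℕ // α.degree + D j = d} := by
    have := fun j => Finsupp.finite_degree_add_eq (Fin s) (D j) d
    rw [← Nat.card_sigma]
    exact Nat.card_congr ⟨fun p => ⟨p.1.2, p.1.1, p.2⟩, fun q => ⟨(q.2.1, q.1), q.2.2⟩,
      fun _ => rfl, fun _ => rfl⟩
  simp [hsplit, Finset.sum_mul, coeff_X_pow_mul_invOneSubPow_val]

open Polynomial in
theorem Polynomial.natDegree_lt_of_mul_eq_mul {R : Type*} [CommRing R] [IsDomain R]
    {p q r u : R[X]} (hr : r ≠ 0) (hq : q ≠ 0) (h : r * q = p * u) (hpq : p.degree < q.degree) :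
    r.natDegree < u.natDegree := by
  have hp : p ≠ 0 := by rintro rfl; simp [hr, hq] at h
  have hu : u ≠ 0 := by rintro rfl; simp [hr, hq] at h
  have := congrArg natDegree h
  rw [natDegree_mul hr hq, natDegree_mul hp hu] at this
  have := natDegree_lt_natDegree hp hpq
  omega

open Polynomial in
theorem Polynomial.coeff_sum_X_pow_ne_zero {ι R : Type*} [Fintype ι] [Semiring R] [CharZero R]
    (D : ι → ℕ) (j : ι) : (∑ i, X ^ D i : R[X]).coeff (D j) ≠ 0 := by
  classical
  simp

open Polynomial in
theorem generation_degree_lt_krull_dim_general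
    (k A : Type) [Field k] [CommRing A] [Algebra k A]
    (𝒜 : ℕ → Submodule k A) [GradedAlgebra 𝒜]
    (s m : ℕ)
    (f : Fin s → A) (hf : ∀ i, f i ∈ 𝒜 1)
    (hind : AlgebraicIndependent k f)
    (b : Module.Basis (Fin m) (Algebra.adjoin k (Set.range f)) A)
    (D : Fin m → ℕ) (hb : ∀ j, (b j : A) ∈ 𝒜 (D j))
    (ha : ∃ p q : Polynomial ℚ, q ≠ 0 ∧ p.degree < q.degree ∧
      (PowerSeries.mk fun d => (Module.finrank k (𝒜 d) : ℚ)) * (q : PowerSeries ℚ)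
        = (p : PowerSeries ℚ)) :
    ∀ j, D j < s := by
  intro j
  obtain ⟨B, hB⟩ := hind.exists_basis_mem_graded 𝒜 hf b hb
  obtain ⟨p, q, hq, hdeg, hH⟩ := ha
  set r : ℚ[X] := ∑ i, Polynomial.X ^ D i
  have hHilbert :
      (PowerSeries.mk fun d => (finrank k (𝒜 d) : ℚ)) = r * (invOneSubPow ℚ s).val := by
    simp_rw [finrank_eq_natCard_of_basis_mem 𝒜 B hB,
      mk_natCard_degree_add_eq_sum_mul_invOneSubPow, r, ← coeToPowerSeries.ringHom_apply,
      map_sum, map_pow, coeToPowerSeries.ringHom_apply, Polynomial.coe_X]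
  have hpoly : r * q = p * (1 - Polynomial.X) ^ s := by
    apply Polynomial.coe_inj.mp
    push_cast
    rw [← hH, hHilbert, ← invOneSubPow_inv_eq_one_sub_pow, Units.inv_eq_val_inv,
      mul_right_comm (_ * _), Units.mul_inv_cancel_right]
  have hr : r.coeff (D j) ≠ 0 := coeff_sum_X_pow_ne_zero D j
  calc D j ≤ r.natDegree := le_natDegree_of_ne_zero hr
    _ < ((1 - Polynomial.X) ^ s : ℚ[X]).natDegree :=
      natDegree_lt_of_mul_eq_mul (fun h => hr (by simp [h])) hq hpoly hdeg
    _ = s := by simp [natDegree_pow, natDegree_sub_eq_right_of_natDegree_lt]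

/-- Generation bound from a degree-one hsop and a negative `a`-invariant:
let `A` be ℕ-graded over a field `k` with `A₀ = k`, of Krull dimension `s`;
let `f₁,…,f_s ∈ A₁` be a homogeneous system of parameters, so that `A` is a free
module over `S = k[f₁,…,f_s]` with homogeneous basis `y₁,…,y_m` (`deg y_j = D j`);
and suppose the Hilbert series `H(A;t)` is a rational function of negative degree
(i.e. `H(A;t) = p/q` with `deg p < deg q`).  Then every `D j < s`; in particular
`A` is generated as a `k`-algebra in degrees `< s = dim A`. -/
theorem generation_degree_lt_krull_dim
    (k A : Type) [Field k] [CommRing A] [Algebra k A] [IsNoetherianRing A]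
    (𝒜 : ℕ → Submodule k A) [GradedAlgebra 𝒜]
    [∀ d, FiniteDimensional k (𝒜 d)]
    (h0 : 𝒜 0 = (Algebra.ofId k A).range.toSubmodule)
    (s m : ℕ) (hdim : ringKrullDim A = s)
    (f : Fin s → A) (hf : ∀ i, f i ∈ 𝒜 1)
    (hind : AlgebraicIndependent k f)
    (b : Module.Basis (Fin m) (Algebra.adjoin k (Set.range f)) A)
    (D : Fin m → ℕ) (hb : ∀ j, (b j : A) ∈ 𝒜 (D j))
    (ha : ∃ p q : Polynomial ℚ, q ≠ 0 ∧ p.degree < q.degree ∧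
      (PowerSeries.mk fun d => (Module.finrank k (𝒜 d) : ℚ)) * (q : PowerSeries ℚ)
        = (p : PowerSeries ℚ)) :
    ∀ j, D j < s :=
  generation_degree_lt_krull_dim_general k A 𝒜 s m f hf hind b D hb ha
end

section
/- Let n = 3k with k ≥ 2 an integer, λ = (k,k,k,0,…,0) ∈ ℚ^n, μ = (1,…,1). The triangular array x constructed from the sequences T1, T2 (as specified, with blocks labeled T1(j) and T2(j) and remaining entries 0 or determined values) is a vertex of the Gelfand–Tsetlin polytope GT(λ,μ): if ε is any triangular array with x+ε ∈ GT(λ,μ) and x-ε ∈ GT(λ,μ), then ε = 0. -/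
open Finset

lemma pnh_bounds (m : ℕ) : -1/2 ≤ (-1/2:ℚ)^m ∧ (-1/2:ℚ)^m ≤ 1 := by
  induction m with
  | zero => norm_num
  | succ m ih => rw [pow_succ]; constructor <;> nlinarith [ih.1, ih.2]

lemma pnh_bounds1 (m : ℕ) (h : 1 ≤ m) : -1/2 ≤ (-1/2:ℚ)^m ∧ (-1/2:ℚ)^m ≤ 1/4 := by
  obtain ⟨m, rfl⟩ : ∃ m', m = m' + 1 := ⟨m - 1, by omega⟩
  rw [pow_succ]
  obtain ⟨h1, h2⟩ := pnh_bounds m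
  constructor <;> nlinarith

lemma pnh_bounds2 (m : ℕ) (h : 2 ≤ m) : -1/8 ≤ (-1/2:ℚ)^m ∧ (-1/2:ℚ)^m ≤ 1/4 := by
  obtain ⟨m, rfl⟩ : ∃ m', m = m' + 1 := ⟨m - 1, by omega⟩
  rw [pow_succ]
  obtain ⟨h1, h2⟩ := pnh_bounds1 m (by omega)
  constructor <;> nlinarith

lemma sum_Icc_one (f : ℕ → ℚ) : ∑ i ∈ Icc 1 1, f i = f 1 := by
  rw [Finset.Icc_self, Finset.sum_singleton]

lemma sum_Icc_two (f : ℕ → ℚ) : ∑ i ∈ Icc 1 2, f i = f 1 + f 2 := by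
  rw [show Finset.Icc 1 2 = {1, 2} from by decide]
  simp [Finset.sum_insert]

lemma sum_Icc_three (f : ℕ → ℚ) (r : ℕ) (h3 : 3 ≤ r)
    (hz : ∀ i, 4 ≤ i → i ≤ r → f i = 0) :
    ∑ i ∈ Icc 1 r, f i = f 1 + f 2 + f 3 := by
  rw [← Finset.sum_subset (Finset.Icc_subset_Icc_right h3 : Icc 1 3 ⊆ Icc 1 r)]
  · rw [show Finset.Icc 1 3 = {1, 2, 3} from by decide]
    simp [Finset.sum_insert]; ring
  · intro i hi hni
    simp only [Finset.mem_Icc] at hi hni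
    exact hz i (by omega) (by omega)


/-- Membership in the Gelfand–Tsetlin polytope `GT(λ, μ)` for `λ = (k,k,k,0,…,0) ∈ ℚ^n`
and `μ = (1,…,1)`: a triangular array `y = (y i j)_{1 ≤ i ≤ j ≤ n}` (1-indexed)
satisfying the interlacing inequalities, top row `λ`, and row sums `Σ_{i=1}^j y i j = j`. -/
def memGT (n k : ℕ) (y : ℕ → ℕ → ℚ) : Prop :=
  (∀ i j : ℕ, 1 ≤ i → i ≤ j → j ≤ n - 1 →
      y i (j + 1) ≥ y i j ∧ y i j ≥ y (i + 1) (j + 1)) ∧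
  (∀ i : ℕ, 1 ≤ i → i ≤ n → y i n = if i ≤ 3 then (k : ℚ) else 0) ∧
  (∀ j : ℕ, 1 ≤ j → j ≤ n → ∑ i ∈ Finset.Icc 1 j, y i j = j)

set_option maxHeartbeats 2000000 in
/-- The triangular array `x` built from the sequences `T1`, `T2` (blocks as in the
paper, boundary entries `2 - T1 N`, `3 - 2 T1 N`, `1`, all remaining entries `0`)
is a vertex of `GT(k·ϖ₃, (1,…,1))` for `n = 3k`: it lies in the polytope, and if
`x + ε` and `x - ε` both lie in `GT(λ,μ)` then `ε` vanishes on the triangle. -/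
theorem gt_pattern_is_vertex (k n N : ℕ) (hk : 2 ≤ k) (hn : n = 3 * k)
    (hN : N = k + k / 2 - 2)
    (T1 T2 : ℕ → ℚ)
    (hT1 : ∀ i : ℕ, T1 i = (k : ℚ) - (2/3) * i + (5/9) * (-1/2 : ℚ) ^ i - 5/9)
    (hT2 : ∀ i : ℕ, T2 i = (k : ℚ) - (2/3) * i - (5/18) * (-1/2 : ℚ) ^ i - 2/9)
    (x : ℕ → ℕ → ℚ)
    (htop : x 1 n = k ∧ x 2 n = k ∧ x 3 n = k)
    (hrow1 : x 1 (n - 1) = k ∧ x 2 (n - 1) = k ∧ x 3 (n - 1) = k - 1)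
    (hrow2 : x 1 (n - 2) = k ∧ x 2 (n - 2) = k - 1/2)
    (hrow3 : x 1 (n - 3) = k)
    (hblock : ∀ j : ℕ, 1 ≤ j → j ≤ N - 1 →
      x 3 (n - 2*j) = T1 j ∧
      x 2 (n - 2*j - 1) = T1 j ∧ x 3 (n - 2*j - 1) = T1 j ∧
      x 1 (n - 2*j - 2) = T2 j ∧ x 2 (n - 2*j - 2) = T1 j ∧
      x 1 (n - 2*j - 3) = T1 j)
    (heven : Even k →
      x 3 4 = T1 N ∧ x 2 3 = T1 N ∧ x 3 3 = T1 N ∧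
      x 1 2 = 2 - T1 N ∧ x 2 2 = T1 N ∧ x 1 1 = 1)
    (hodd : Odd k →
      x 3 5 = T1 N ∧ x 2 4 = T1 N ∧ x 3 4 = T1 N ∧
      x 1 3 = T1 N ∧ x 2 3 = T1 N ∧ x 3 3 = 3 - 2 * T1 N ∧
      x 1 2 = T1 N ∧ x 2 2 = 2 - T1 N ∧ x 1 1 = 1)
    (hzero : ∀ i j : ℕ, 4 ≤ i → i ≤ j → j ≤ n → x i j = 0) :
    memGT n k x ∧
      ∀ ε : ℕ → ℕ → ℚ, memGT n k (x + ε) → memGT n k (x - ε) →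
        ∀ i j : ℕ, 1 ≤ i → i ≤ j → j ≤ n → ε i j = 0 := by
  have hk6 : 6 ≤ n := by omega
  have hN1 : 1 ≤ N := by omega
  have hpar : (k % 2 = 0 ∧ 2*N + 4 = 3*k) ∨ (k % 2 = 1 ∧ 2*N + 5 = 3*k) := by omega
  have hev := fun h => heven (Nat.even_iff.mpr h)
  have hod := fun h => hodd (Nat.odd_iff.mpr h)
  have hT10 : T1 0 = (k:ℚ) := by rw [hT1]; norm_num
  have hT11 : T1 1 = (k:ℚ) - 3/2 := by rw [hT1]; push_cast; ring_nf
  have hmono : ∀ a b : ℕ, b = a + 1 → T1 b ≤ T1 a := by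
    rintro a b rfl
    rw [hT1, hT1, pow_succ]
    have := pnh_bounds a
    push_cast
    nlinarith [this.1, this.2]
  have hT1T2 : ∀ a : ℕ, 1 ≤ a → T1 a ≤ T2 a := by
    intro a ha
    rw [hT1, hT2]
    have := pnh_bounds1 a ha
    linarith [this.1, this.2]
  have hT2T1 : ∀ a b : ℕ, b = a + 1 → T2 b ≤ T1 a := by
    rintro a b rfl
    rw [hT1, hT2, pow_succ]
    have := pnh_bounds a
    push_cast
    nlinarith [this.1, this.2]
  have hT1pos : ∀ a : ℕ, a ≤ N → 0 ≤ T1 a := by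
    intro a ha
    have h2 : 2*(a:ℚ) + 4 ≤ 3*k := by exact_mod_cast (by omega : 2*a + 4 ≤ 3*k)
    rw [hT1]
    have := pnh_bounds a
    linarith [this.1]
  have hI1 : ∀ a b : ℕ, b = a + 1 → T2 a + T1 a + T1 b = 3*(k:ℚ) - 2*a - 2 := by
    rintro a b rfl
    rw [hT1, hT1, hT2, pow_succ]
    push_cast
    ring
  have hI2 : ∀ a b : ℕ, b = a + 1 → T1 a + 2 * T1 b = 3*(k:ℚ) - 2*a - 3 := by
    rintro a b rfl
    rw [hT1, hT1, pow_succ]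
    push_cast
    ring
  have hTNe : k % 2 = 0 → T1 N ≤ 1 := by
    intro h
    obtain (⟨_, hnk⟩ | ⟨h1, _⟩) := hpar
    · have hc : 2*(N:ℚ) + 4 = 3*k := by exact_mod_cast hnk
      rw [hT1]
      have := pnh_bounds1 N hN1
      linarith [this.2]
    · omega
  have hTNo : k % 2 = 1 → 1 ≤ T1 N ∧ T1 N ≤ 3/2 := by
    intro h
    obtain (⟨h1, _⟩ | ⟨_, hnk⟩) := hpar
    · omega
    · have hc : 2*(N:ℚ) + 5 = 3*k := by exact_mod_cast hnk
      rw [hT1]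
      have := pnh_bounds2 N (by omega)
      constructor <;> linarith [this.1, this.2]
  have hrowA : ∀ m r : ℕ, 1 ≤ m → m ≤ N → r + 2*m = n →
      x 1 r = (if m = 1 then (k:ℚ) else T2 (m-1)) ∧
      x 2 r = (if m = 1 then (k:ℚ) - 1/2 else T1 (m-1)) ∧
      x 3 r = T1 m := by
    intro m r hm1 hmN hr
    have hx3 : x 3 r = T1 m := by
      rcases lt_or_eq_of_le hmN with hlt | rfl
      · have h := (hblock m hm1 (by omega)).1
        rwa [show n - 2*m = r from by omega] at h
      · obtain (⟨h0, hnk⟩ | ⟨h1, hnk⟩) := hpar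
        · rw [show r = 4 from by omega]; exact (hev h0).1
        · rw [show r = 5 from by omega]; exact (hod h1).1
    refine ⟨?_, ?_, hx3⟩ <;> by_cases hm : m = 1
    · subst hm; rw [if_pos rfl, show r = n - 2 from by omega]; exact hrow2.1
    · rw [if_neg hm]
      have h := (hblock (m-1) (by omega) (by omega)).2.2.2.1
      rwa [show n - 2*(m-1) - 2 = r from by omega] at h
    · subst hm; rw [if_pos rfl, show r = n - 2 from by omega]; exact hrow2.2
    · rw [if_neg hm]
      have h := (hblock (m-1) (by omega) (by omega)).2.2.2.2.1
      rwa [show n - 2*(m-1) - 2 = r from by omega] at h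
  have hrowB : ∀ m r : ℕ, 1 ≤ m → m ≤ N → r + 2*m + 1 = n →
      x 1 r = T1 (m-1) ∧ x 2 r = T1 m ∧ x 3 r = T1 m := by
    intro m r hm1 hmN hr
    refine ⟨?_, ?_, ?_⟩
    · by_cases hm : m = 1
      · subst hm; rw [show (1:ℕ) - 1 = 0 from rfl, hT10, show r = n - 3 from by omega]
        exact hrow3
      · have h := (hblock (m-1) (by omega) (by omega)).2.2.2.2.2
        rwa [show n - 2*(m-1) - 3 = r from by omega] at h
    · rcases lt_or_eq_of_le hmN with hlt | rfl
      · have h := (hblock m hm1 (by omega)).2.1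
        rwa [show n - 2*m - 1 = r from by omega] at h
      · obtain (⟨h0, hnk⟩ | ⟨h1, hnk⟩) := hpar
        · rw [show r = 3 from by omega]; exact (hev h0).2.1
        · rw [show r = 4 from by omega]; exact (hod h1).2.1
    · rcases lt_or_eq_of_le hmN with hlt | rfl
      · have h := (hblock m hm1 (by omega)).2.2.1
        rwa [show n - 2*m - 1 = r from by omega] at h
      · obtain (⟨h0, hnk⟩ | ⟨h1, hnk⟩) := hpar
        · rw [show r = 3 from by omega]; exact (hev h0).2.2.1
        · rw [show r = 4 from by omega]; exact (hod h1).2.2.1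
  have hx44 : x 4 4 = 0 := hzero 4 4 (le_refl 4) (le_refl 4) (by omega)
  have hkQ : (2:ℚ) ≤ k := by exact_mod_cast hk
  have hinter : ∀ i j : ℕ, 1 ≤ i → i ≤ j → j ≤ n - 1 →
      x i (j+1) ≥ x i j ∧ x i j ≥ x (i+1) (j+1) := by
    intro i j hi hij hj
    have hjn : j + 1 ≤ n := by omega
    have hj1 : 1 ≤ j := le_trans hi hij
    by_cases hi4 : 4 ≤ i
    · rw [hzero i j hi4 hij (by omega), hzero i (j+1) hi4 (by omega) hjn,
        hzero (i+1) (j+1) (by omega) (by omega) hjn]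
      exact ⟨le_refl 0, le_refl 0⟩
    push_neg at hi4
    by_cases hA : j + 1 = n
    · have hje : j = n - 1 := by omega
      rw [hA, hje]
      interval_cases i
      · rw [htop.1, htop.2.1, hrow1.1]; exact ⟨le_refl _, le_refl _⟩
      · rw [htop.2.1, htop.2.2, hrow1.2.1]; exact ⟨le_refl _, le_refl _⟩
      · rw [htop.2.2, hrow1.2.2, hzero 4 n (by norm_num) (by omega) (le_refl n)]
        constructor <;> linarith
    by_cases hB : j + 2 = n
    · have hje : j + 1 = n - 1 := by omega
      obtain ⟨a1, a2, a3⟩ := hrowA 1 j (le_refl 1) hN1 (by omega)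
      rw [if_pos rfl] at a1 a2
      rw [hje]
      interval_cases i
      · rw [a1, hrow1.1, hrow1.2.1]; exact ⟨le_refl _, le_refl _⟩
      · rw [a2, hrow1.2.1, hrow1.2.2]; constructor <;> linarith
      · rw [a3, hrow1.2.2, hT11, hzero 4 (n-1) (by norm_num) (by omega) (by omega)]
        constructor <;> linarith
    by_cases hbot : (k % 2 = 0 ∧ j ≤ 2) ∨ (k % 2 = 1 ∧ j ≤ 3)
    · obtain (⟨h0, hj2⟩ | ⟨h1, hj3⟩) := hbot
      · obtain ⟨e34, e23, e33, e12, e22, e11⟩ := hev h0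
        have hne : 2*N + 4 = 3*k := by omega
        have hT1N1 : T1 N ≤ 1 := hTNe h0
        interval_cases j
        · interval_cases i
          rw [e12, e11, e22]; constructor <;> linarith
        · obtain ⟨b1, b2, b3⟩ := hrowB N 3 hN1 (le_refl N) (by omega)
          have hstep : T1 (N-1) + 2 * T1 N = 3*(k:ℚ) - 2*((N-1:ℕ):ℚ) - 3 := by
            have := hI2 (N-1) N (by omega); linarith
          have hc : 2*((N:ℕ):ℚ) + 4 = 3*(k:ℚ) := by exact_mod_cast hne
          have hc2 : ((N-1:ℕ):ℚ) = (N:ℚ) - 1 := by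
            rw [Nat.cast_sub hN1, Nat.cast_one]
          have hTN13 : T1 (N-1) = 3 - 2*T1 N := by rw [hc2] at hstep; linarith
          interval_cases i
          · rw [b1, e12, b2]; constructor <;> linarith
          · rw [b2, e22, e33]; exact ⟨le_refl _, le_refl _⟩
      · obtain ⟨e35, e24, e34, e13, e23, e33, e12, e22, e11⟩ := hod h1
        obtain ⟨hTN1, hTN2⟩ := hTNo h1
        interval_cases j
        · interval_cases i
          rw [e12, e11, e22]; constructor <;> linarith
        · interval_cases i
          · rw [e13, e12, e23]; exact ⟨le_refl _, le_refl _⟩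
          · rw [e23, e22, e33]; constructor <;> linarith
        · obtain ⟨b1, b2, b3⟩ := hrowB N 4 hN1 (le_refl N) (by omega)
          interval_cases i
          · rw [b1, e13, b2]; exact ⟨hmono (N-1) N (by omega), le_refl _⟩
          · rw [b2, e23, b3]; exact ⟨le_refl _, le_refl _⟩
          · rw [e34, e33, hx44]; constructor <;> linarith
    · by_cases hpj : (n - j) % 2 = 1
      · obtain ⟨m, hm⟩ : ∃ m, j + 2*m + 1 = n := ⟨(n-j)/2, by omega⟩
        have hm1 : 1 ≤ m := by omega
        have hmN : m ≤ N := by omega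
        obtain ⟨b1, b2, b3⟩ := hrowB m j hm1 hmN (by omega)
        obtain ⟨a1, a2, a3⟩ := hrowA m (j+1) hm1 hmN (by omega)
        interval_cases i
        · rw [a1, b1, a2]
          by_cases hm' : m = 1
          · subst hm'
            rw [show (1:ℕ) - 1 = 0 from rfl, hT10, if_pos rfl, if_pos rfl]
            constructor <;> linarith
          · rw [if_neg hm', if_neg hm']
            exact ⟨hT1T2 (m-1) (by omega), le_refl _⟩
        · rw [a2, b2, a3]
          by_cases hm' : m = 1
          · subst hm'
            rw [if_pos rfl, hT11]
            constructor <;> linarith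
          · rw [if_neg hm']
            exact ⟨hmono (m-1) m (by omega), le_refl _⟩
        · rw [a3, b3, hzero 4 (j+1) (by norm_num) (by omega) (by omega)]
          exact ⟨le_refl _, hT1pos m hmN⟩
      · obtain ⟨m, hm⟩ : ∃ m, j + 2*m = n := ⟨(n-j)/2, by omega⟩
        have hm2 : 2 ≤ m := by omega
        have hmN : m ≤ N := by omega
        obtain ⟨a1, a2, a3⟩ := hrowA m j (by omega) hmN hm
        obtain ⟨b1, b2, b3⟩ := hrowB (m-1) (j+1) (by omega) (by omega) (by omega)
        rw [if_neg (by omega : ¬ m = 1)] at a1 a2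
        interval_cases i
        · rw [a1, b1, b2]
          exact ⟨hT2T1 (m-1-1) (m-1) (by omega), hT1T2 (m-1) (by omega)⟩
        · rw [a2, b2, b3]; exact ⟨le_refl _, le_refl _⟩
        · rw [a3, b3, hzero 4 (j+1) (by norm_num) (by omega) (by omega)]
          exact ⟨hmono (m-1) m (by omega), hT1pos m hmN⟩
  have htoprow : ∀ i : ℕ, 1 ≤ i → i ≤ n → x i n = if i ≤ 3 then (k:ℚ) else 0 := by
    intro i h1 hin
    by_cases h3 : i ≤ 3
    · rw [if_pos h3]
      interval_cases i
      · exact htop.1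
      · exact htop.2.1
      · exact htop.2.2
    · rw [if_neg h3]
      exact hzero i n (by omega) (by omega) (le_refl n)
  have hsums : ∀ r : ℕ, 1 ≤ r → r ≤ n → ∑ i ∈ Finset.Icc 1 r, x i r = r := by
    intro r h1 hrn
    by_cases hA : r = n
    · rw [sum_Icc_three (fun i => x i r) r (by omega)
        (fun i h4 hi => hzero i r h4 hi (by omega)), hA, htop.1, htop.2.1, htop.2.2]
      have hc : (n:ℚ) = 3*(k:ℚ) := by exact_mod_cast hn
      linarith
    by_cases hB : r + 1 = n
    · have hre : r = n - 1 := by omega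
      have hc : (r:ℚ) + 1 = 3*(k:ℚ) := by exact_mod_cast (show r + 1 = 3*k by omega)
      have v1 : x 1 r = (k:ℚ) := by rw [hre]; exact hrow1.1
      have v2 : x 2 r = (k:ℚ) := by rw [hre]; exact hrow1.2.1
      have v3 : x 3 r = (k:ℚ) - 1 := by rw [hre]; exact hrow1.2.2
      rw [sum_Icc_three (fun i => x i r) r (by omega)
        (fun i h4 hi => hzero i r h4 hi (by omega)), v1, v2, v3]
      linarith
    by_cases hbot : (k % 2 = 0 ∧ r ≤ 2) ∨ (k % 2 = 1 ∧ r ≤ 3)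
    · obtain (⟨h0, hr2⟩ | ⟨h1', hr3⟩) := hbot
      · obtain ⟨e34, e23, e33, e12, e22, e11⟩ := hev h0
        interval_cases r
        · rw [sum_Icc_one, e11]; norm_num
        · rw [sum_Icc_two, e12, e22]; push_cast; ring
      · obtain ⟨e35, e24, e34, e13, e23, e33, e12, e22, e11⟩ := hod h1'
        interval_cases r
        · rw [sum_Icc_one, e11]; norm_num
        · rw [sum_Icc_two, e12, e22]; push_cast; ring
        · rw [sum_Icc_three (fun i => x i 3) 3 (le_refl 3)
            (fun i h4 hi => absurd (le_trans h4 hi) (by norm_num)), e13, e23, e33]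
          push_cast; ring
    · by_cases hpj : (n - r) % 2 = 1
      · obtain ⟨m, hm⟩ : ∃ m, r + 2*m + 1 = n := ⟨(n-r)/2, by omega⟩
        have hm1 : 1 ≤ m := by omega
        have hmN : m ≤ N := by omega
        obtain ⟨b1, b2, b3⟩ := hrowB m r hm1 hmN hm
        have hi2 := hI2 (m-1) m (by omega)
        have hc2 : ((m-1:ℕ):ℚ) = (m:ℚ) - 1 := by
          rw [Nat.cast_sub hm1, Nat.cast_one]
        have hc : (r:ℚ) + 2*(m:ℚ) + 1 = 3*(k:ℚ) := by
          exact_mod_cast (show r + 2*m + 1 = 3*k by omega)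
        rw [sum_Icc_three (fun i => x i r) r (by omega)
          (fun i h4 hi => hzero i r h4 hi (by omega)), b1, b2, b3]
        rw [hc2] at hi2
        linarith
      · obtain ⟨m, hm⟩ : ∃ m, r + 2*m = n := ⟨(n-r)/2, by omega⟩
        have hm1 : 1 ≤ m := by omega
        have hmN : m ≤ N := by omega
        obtain ⟨a1, a2, a3⟩ := hrowA m r hm1 hmN hm
        have hc : (r:ℚ) + 2*(m:ℚ) = 3*(k:ℚ) := by
          exact_mod_cast (show r + 2*m = 3*k by omega)
        rw [sum_Icc_three (fun i => x i r) r (by omega)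
          (fun i h4 hi => hzero i r h4 hi (by omega)), a1, a2, a3]
        by_cases hm' : m = 1
        · subst hm'
          rw [if_pos rfl, if_pos rfl, hT11]
          push_cast at hc ⊢
          linarith
        · rw [if_neg hm', if_neg hm']
          have hi1 := hI1 (m-1) m (by omega)
          have hc2 : ((m-1:ℕ):ℚ) = (m:ℚ) - 1 := by
            rw [Nat.cast_sub hm1, Nat.cast_one]
          rw [hc2] at hi1
          linarith
  have hmem : memGT n k x := ⟨hinter, htoprow, hsums⟩
  refine ⟨hmem, ?_⟩
  intro ε hp hm
  have htopε : ∀ i : ℕ, 1 ≤ i → i ≤ n → ε i n = 0 := by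
    intro i h1 hin
    have h₁ := hp.2.1 i h1 hin
    have h₂ := htoprow i h1 hin
    simp only [Pi.add_apply] at h₁
    linarith
  have tcol : ∀ i r : ℕ, 1 ≤ i → i ≤ r → r + 1 ≤ n → x i r = x i (r+1) →
      ε i r = ε i (r+1) := by
    intro i r h1 h2 h3 hx
    have ha := (hp.1 i r h1 h2 (by omega)).1
    have hb := (hm.1 i r h1 h2 (by omega)).1
    simp only [Pi.add_apply, Pi.sub_apply, ge_iff_le] at ha hb
    linarith
  have tdiag : ∀ i r : ℕ, 1 ≤ i → i ≤ r → r + 1 ≤ n → x i r = x (i+1) (r+1) →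
      ε i r = ε (i+1) (r+1) := by
    intro i r h1 h2 h3 hx
    have ha := (hp.1 i r h1 h2 (by omega)).2
    have hb := (hm.1 i r h1 h2 (by omega)).2
    simp only [Pi.add_apply, Pi.sub_apply, ge_iff_le] at ha hb
    linarith
  have hsumε : ∀ r : ℕ, 1 ≤ r → r ≤ n → ∑ i ∈ Finset.Icc 1 r, ε i r = 0 := by
    intro r h1 h2
    have ha := hp.2.2 r h1 h2
    have hb := hsums r h1 h2
    have hc : ∑ i ∈ Finset.Icc 1 r, (x i r + ε i r) = (r:ℚ) := by
      simpa [Pi.add_apply] using ha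
    rw [Finset.sum_add_distrib, hb] at hc
    linarith
  have hε4' : ∀ d i r : ℕ, 4 ≤ i → i ≤ r → r + d = n → ε i r = 0 := by
    intro d
    induction d with
    | zero =>
      intro i r h4 hir hr
      rw [show r = n from by omega]
      exact htopε i (by omega) (by omega)
    | succ d ih =>
      intro i r h4 hir hr
      have h1 : x i r = x i (r+1) := by
        rw [hzero i r h4 hir (by omega), hzero i (r+1) h4 (by omega) (by omega)]
      rw [tcol i r (by omega) hir (by omega) h1]
      exact ih i (r+1) h4 (by omega) (by omega)
  have hε4 : ∀ i r : ℕ, 4 ≤ i → i ≤ r → r ≤ n → ε i r = 0 :=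
    fun i r h4 hir hrn => hε4' (n - r) i r h4 hir (by omega)
  have hsum3ε : ∀ r : ℕ, 3 ≤ r → r ≤ n → ε 1 r + ε 2 r + ε 3 r = 0 := by
    intro r h3 hrn
    have h := hsumε r (by omega) hrn
    rwa [sum_Icc_three (fun i => ε i r) r h3 (fun i h4 hi => hε4 i r h4 hi hrn)] at h
  have hsum2ε : ε 1 2 + ε 2 2 = 0 := by
    have h := hsumε 2 (by omega) (by omega)
    rwa [sum_Icc_two] at h
  have hsum1ε : ε 1 1 = 0 := by
    have h := hsumε 1 (by omega) (by omega)
    rwa [sum_Icc_one] at h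
  have R : ∀ m : ℕ, m ≤ N + 1 → ∀ i r : ℕ, 1 ≤ i → i ≤ r → r ≤ n →
      n + 1 ≤ r + 2*m → ε i r = 0 := by
    intro m
    induction m with
    | zero => intro _ i r _ _ h1 h2; omega
    | succ m ih =>
      intro hmN i r hi hir hrn hlow
      by_cases hup : n + 1 ≤ r + 2*m
      · exact ih (by omega) i r hi hir hrn hup
      push_neg at hup
      by_cases hi4 : 4 ≤ i
      · exact hε4 i r hi4 hir hrn
      push_neg at hi4
      rcases (by omega : r = n ∨ r + 1 = n ∨ (r + 2 = n ∨ r + 3 = n) ∨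
          (2 ≤ m ∧ (r + 2*m = n ∨ r + 2*m + 1 = n))) with h | h | h | ⟨hm2, h⟩
      · rw [h]
        exact htopε i hi (by omega)
      · have e1 : ε 1 r = 0 := by
          rw [tcol 1 r (by omega) (by omega) (by omega)
            (by rw [h, show r = n - 1 from by omega, hrow1.1, htop.1])]
          rw [h]
          exact htopε 1 (by omega) (by omega)
        have e2 : ε 2 r = 0 := by
          rw [tcol 2 r (by omega) (by omega) (by omega)
            (by rw [h, show r = n - 1 from by omega, hrow1.2.1, htop.2.1])]
          rw [h]
          exact htopε 2 (by omega) (by omega)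
        have e3 : ε 3 r = 0 := by
          have := hsum3ε r (by omega) (by omega)
          linarith
        interval_cases i
        · exact e1
        · exact e2
        · exact e3
      · -- rows n-2 and n-3
        have hm1 : 1 ≤ m := by omega
        obtain ⟨a1, a2, a3⟩ := hrowA 1 (n-2) (le_refl 1) hN1 (by omega)
        rw [if_pos rfl] at a1 a2
        obtain ⟨b1, b2, b3⟩ := hrowB 1 (n-3) (le_refl 1) hN1 (by omega)
        rw [show (1:ℕ) - 1 = 0 from rfl, hT10] at b1
        have z : ∀ i' r' : ℕ, 1 ≤ i' → i' ≤ r' → r' ≤ n → n ≤ r' + 1 → ε i' r' = 0 :=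
          fun i' r' h1 h2 h3 h4 => ih (by omega) i' r' h1 h2 h3 (by omega)
        have e1 : ε 1 (n-2) = 0 := by
          rw [tcol 1 (n-2) (by omega) (by omega) (by omega)
            (by rw [a1, show n-2+1 = n-1 from by omega, hrow1.1])]
          exact z 1 (n-2+1) (by omega) (by omega) (by omega) (by omega)
        have e13 : ε 1 (n-3) = 0 := by
          rw [tcol 1 (n-3) (by omega) (by omega) (by omega)
            (by rw [b1, show n-3+1 = n-2 from by omega, a1])]
          rw [show n-3+1 = n-2 from by omega]
          exact e1
        have e23 : ε 2 (n-3) = ε 3 (n-2) := by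
          have hh := tdiag 2 (n-3) (by omega) (by omega) (by omega)
            (by rw [b2, show n-3+1 = n-2 from by omega, a3])
          rwa [show n-3+1 = n-2 from by omega] at hh
        have e33 : ε 3 (n-3) = ε 3 (n-2) := by
          have hh := tcol 3 (n-3) (by omega) (by omega) (by omega)
            (by rw [b3, show n-3+1 = n-2 from by omega, a3])
          rwa [show n-3+1 = n-2 from by omega] at hh
        have hs3 : ε 1 (n-3) + ε 2 (n-3) + ε 3 (n-3) = 0 := hsum3ε (n-3) (by omega) (by omega)
        have hs2 : ε 1 (n-2) + ε 2 (n-2) + ε 3 (n-2) = 0 := hsum3ε (n-2) (by omega) (by omega)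
        have f3 : ε 3 (n-2) = 0 := by linarith
        have f2 : ε 2 (n-2) = 0 := by linarith
        rcases h with h | h
        · have hre : r = n - 2 := by omega
          subst hre
          interval_cases i
          · exact e1
          · exact f2
          · exact f3
        · have hre : r = n - 3 := by omega
          subst hre
          interval_cases i
          · exact e13
          · rw [e23]; exact f3
          · rw [e33]; exact f3
      · -- generic step: rows n-2m, n-2m-1 with 2 ≤ m ≤ N
        have hmN' : m ≤ N := by omega
        have hr2n : (n - 2*m) + 2*m = n := by omega
        have hr24 : 4 ≤ n - 2*m := by omega
        obtain ⟨a1, a2, a3⟩ := hrowA m (n-2*m) (by omega) hmN' hr2n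
        rw [if_neg (by omega : ¬ m = 1)] at a1 a2
        obtain ⟨b1, b2, b3⟩ := hrowB m (n-2*m-1) (by omega) hmN' (by omega)
        obtain ⟨c1, c2, c3⟩ := hrowB (m-1) (n-2*m+1) (by omega) (by omega) (by omega)
        have z : ∀ i' r' : ℕ, 1 ≤ i' → i' ≤ r' → r' ≤ n → n + 1 ≤ r' + 2*m → ε i' r' = 0 :=
          ih (by omega)
        have e2 : ε 2 (n-2*m) = 0 := by
          rw [tcol 2 (n-2*m) (by omega) (by omega) (by omega)
            (by rw [a2, show n-2*m+1 = n-2*m+1 from rfl, c2, show m - 1 = m - 1 from rfl])]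
          exact z 2 (n-2*m+1) (by omega) (by omega) (by omega) (by omega)
        have e1b : ε 1 (n-2*m-1) = 0 := by
          rw [tdiag 1 (n-2*m-1) (by omega) (by omega) (by omega)
            (by rw [b1, show n-2*m-1+1 = n-2*m from by omega, a2])]
          rw [show n-2*m-1+1 = n-2*m from by omega]
          exact e2
        have e2b : ε 2 (n-2*m-1) = ε 3 (n-2*m) := by
          have hh := tdiag 2 (n-2*m-1) (by omega) (by omega) (by omega)
            (by rw [b2, show n-2*m-1+1 = n-2*m from by omega, a3])
          rwa [show n-2*m-1+1 = n-2*m from by omega] at hh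
        have e3b : ε 3 (n-2*m-1) = ε 3 (n-2*m) := by
          have hh := tcol 3 (n-2*m-1) (by omega) (by omega) (by omega)
            (by rw [b3, show n-2*m-1+1 = n-2*m from by omega, a3])
          rwa [show n-2*m-1+1 = n-2*m from by omega] at hh
        have hs1 : ε 1 (n-2*m-1) + ε 2 (n-2*m-1) + ε 3 (n-2*m-1) = 0 :=
          hsum3ε (n-2*m-1) (by omega) (by omega)
        have hs2 : ε 1 (n-2*m) + ε 2 (n-2*m) + ε 3 (n-2*m) = 0 :=
          hsum3ε (n-2*m) (by omega) (by omega)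
        have f3 : ε 3 (n-2*m) = 0 := by linarith
        have f1 : ε 1 (n-2*m) = 0 := by linarith
        rcases h with h | h
        · have hre : r = n - 2*m := by omega
          subst hre
          interval_cases i
          · exact f1
          · exact e2
          · exact f3
        · have hre : r = n - 2*m - 1 := by omega
          subst hre
          interval_cases i
          · exact e1b
          · rw [e2b]; exact f3
          · rw [e3b]; exact f3
  intro i j h1 h2 h3
  by_cases hup : n + 1 ≤ j + 2*(N+1)
  · exact R (N+1) (le_refl _) i j h1 h2 h3 hup
  by_cases hi4 : 4 ≤ i
  · exact hε4 i j hi4 h2 h3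
  push_neg at hi4
  obtain (⟨h0, hnk⟩ | ⟨h1', hnk⟩) := hpar
  · -- even k, j ≤ 2
    obtain ⟨e34, e23, e33, e12, e22, e11⟩ := hev h0
    have hj2 : j ≤ 2 := by omega
    have e2 : ε 2 2 = 0 := by
      rw [tcol 2 2 (by omega) (by omega) (by omega) (by norm_num [e22, e23])]
      exact R (N+1) (le_refl _) 2 3 (by omega) (by omega) (by omega) (by omega)
    have e1 : ε 1 2 = 0 := by linarith [hsum2ε]
    have hj1 : 1 ≤ j := by omega
    interval_cases j
    · interval_cases i
      exact hsum1ε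
    · interval_cases i
      · exact e1
      · exact e2
  · -- odd k, j ≤ 3
    obtain ⟨e35, e24, e34, e13, e23, e33, e12, e22, e11⟩ := hod h1'
    have hj3 : j ≤ 3 := by omega
    have z4 : ∀ i' : ℕ, 1 ≤ i' → i' ≤ 4 → ε i' 4 = 0 :=
      fun i' ha hb => R (N+1) (le_refl _) i' 4 ha hb (by omega) (by omega)
    have f13 : ε 1 3 = 0 := by
      rw [tdiag 1 3 (by omega) (by omega) (by omega) (by norm_num [e13, e24])]
      exact z4 2 (by omega) (by omega)
    have f23 : ε 2 3 = 0 := by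
      rw [tcol 2 3 (by omega) (by omega) (by omega) (by norm_num [e23, e24])]
      exact z4 2 (by omega) (by omega)
    have f33 : ε 3 3 = 0 := by
      have := hsum3ε 3 (by omega) (by omega)
      linarith
    have f12 : ε 1 2 = 0 := by
      rw [tdiag 1 2 (by omega) (by omega) (by omega) (by norm_num [e12, e23])]
      exact f23
    have f22 : ε 2 2 = 0 := by linarith [hsum2ε]
    have hj1 : 1 ≤ j := by omega
    interval_cases j
    · interval_cases i
      exact hsum1ε
    · interval_cases i
      · exact f12
      · exact f22
    · interval_cases i
      · exact f13
      · exact f23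
      · exact f33
end

section
/- Let n = 3k with k ≥ 2. The vertex x of GT(k·ϖ₃, (1,…,1)) constructed from the sequences T1, T2 has denominator 2^N where N = k + ⌊k/2⌋ - 2; consequently the graded semigroup of integral Gelfand–Tsetlin patterns lying in GT(N'λ, N'μ) for some N' ≥ 0 has an essential generator of degree 2^N > 2^(n/2 - 3). -/
/-!
`T1` satisfies `2 T1 (j + 1) + T1 j = n - 2j - 3` with `T1 0 = k` and `T1 1 = k - 3/2`, so its
denominator doubles at each step and `T1 j` has denominator exactly `2 ^ j`. Every entry of the
second and third positions of `x` is an integer, `k - 1/2`, or an integral combination of some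
`T1 m` with `m ≤ N`; the row sums then take care of the first position, so `2 ^ N` clears all
denominators, and the entry `T1 N` shows that nothing smaller does.

If `2 ^ N • x = y₁ + y₂` with `yᵢ` integral in the `Mᵢ`-th dilate, every interlacing inequality
that is tight at `x` is tight for both summands. Along the chain of tight inequalities the row
sums of `y₁` reproduce the recurrence of `T1` scaled by `M₁`, so `M₁ • T1 N` is an entry of `y₁`,
hence an integer, and `2 ^ N ∣ M₁ < 2 ^ N`.

Entries are `x i j` with `1 ≤ i ≤ j ≤ n`: `j` is the row (row `n` is the top row) and `i` the
position in it.
-/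

open Finset

/-- Membership in the `M`-th dilate `GT(Mλ, Mμ)` of the Gelfand–Tsetlin polytope for
`λ = (k,k,k,0,…,0) ∈ ℚ^n`, `μ = (1,…,1)`: a triangular array (1-indexed) with the
interlacing inequalities, top row `Mλ`, and row sums `Σ_{i=1}^j y i j = M·j`. -/
def memGTdilate (n k M : ℕ) (y : ℕ → ℕ → ℚ) : Prop :=
  (∀ i j : ℕ, 1 ≤ i → i ≤ j → j ≤ n - 1 →
      y i (j + 1) ≥ y i j ∧ y i j ≥ y (i + 1) (j + 1)) ∧
  (∀ i : ℕ, 1 ≤ i → i ≤ n → y i n = if i ≤ 3 then (M * k : ℚ) else 0) ∧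
  (∀ j : ℕ, 1 ≤ j → j ≤ n → ∑ i ∈ Finset.Icc 1 j, y i j = M * j)

namespace Rat

theorem exists_mul_eq_intCast_iff_den_dvd {q : ℚ} {d : ℕ} :
    (∃ z : ℤ, (d : ℚ) * q = z) ↔ q.den ∣ d := by
  constructor
  · rintro ⟨z, hz⟩
    rcases eq_or_ne d 0 with rfl | hd
    · exact dvd_zero _
    have hq : q = (z : ℚ) / ((d : ℤ) : ℚ) := by
      rw [eq_div_iff (by exact_mod_cast hd), ← hz]; push_cast; ring
    have := Rat.den_dvd z d
    rw [Rat.divInt_eq_div, ← hq] at this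
    exact_mod_cast this
  · rintro ⟨c, rfl⟩
    exact ⟨c * q.num, by push_cast; rw [← Rat.den_mul_eq_num]; ring⟩

theorem den_div_two_of_two_dvd_den {q : ℚ} (h : 2 ∣ q.den) : (q / 2).den = 2 * q.den := by
  have hcop : Nat.Coprime q.num.natAbs (2 * q.den) :=
    Nat.Coprime.mul_right (Nat.Coprime.coprime_dvd_right h q.reduced) q.reduced
  have hq : q / 2 = (q.num : ℚ) / ((2 * q.den : ℕ) : ℤ) := by
    push_cast; nth_rw 1 [← Rat.num_div_den q]; rw [div_div, mul_comm]
  have := Rat.den_div_eq_of_coprime (a := q.num) (b := ((2 * q.den : ℕ) : ℤ)) (by positivity)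
    (by rwa [Int.natAbs_natCast])
  rw [← hq] at this
  exact_mod_cast this

theorem den_eq_two_pow_of_two_mul_add_eq_intCast {q : ℕ → ℚ} (h₁ : (q 1).den = 2)
    (hrec : ∀ j, ∃ z : ℤ, 2 * q (j + 1) + q j = z) {j : ℕ} (hj : 1 ≤ j) :
    (q j).den = 2 ^ j := by
  induction j, hj using Nat.le_induction with
  | base => simpa using h₁
  | succ j hj ih =>
    obtain ⟨z, hz⟩ := hrec j
    have hq : q (j + 1) = (z - q j) / 2 := by linarith
    have hden : (z - q j).den = 2 ^ j := by rw [Rat.intCast_sub_den, ih]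
    rw [hq, den_div_two_of_two_dvd_den (hden ▸ dvd_pow_self 2 (by omega)), hden, pow_succ']

def denDvd (D : ℕ) : AddSubgroup ℚ where
  carrier := {q | q.den ∣ D}
  add_mem' ha hb := (Rat.add_den_dvd_lcm _ _).trans (Nat.lcm_dvd ha hb)
  zero_mem' := by simp
  neg_mem' := by simp

theorem mem_denDvd {q : ℚ} {D : ℕ} : q ∈ denDvd D ↔ q.den ∣ D := Iff.rfl

theorem intCast_mem_denDvd (z : ℤ) (D : ℕ) : (z : ℚ) ∈ denDvd D := by simp [mem_denDvd]

theorem natCast_mem_denDvd (m : ℕ) (D : ℕ) : (m : ℚ) ∈ denDvd D := by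
  exact_mod_cast intCast_mem_denDvd m D

end Rat

namespace memGTdilate

variable {n k M : ℕ} {y : ℕ → ℕ → ℚ}

theorem le_succ (h : memGTdilate n k M y) {i j : ℕ} (hi : 1 ≤ i) (hij : i ≤ j) (hj : j < n) :
    y i j ≤ y i (j + 1) :=
  (h.1 i j hi hij (by omega)).1

theorem succ_succ_le (h : memGTdilate n k M y) {i j : ℕ} (hi : 1 ≤ i) (hij : i ≤ j)
    (hj : j < n) : y (i + 1) (j + 1) ≤ y i j :=
  (h.1 i j hi hij (by omega)).2

theorem top_eq (h : memGTdilate n k M y) {i : ℕ} (hi : 1 ≤ i) (hin : i ≤ n) :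
    y i n = if i ≤ 3 then (M * k : ℚ) else 0 :=
  h.2.1 i hi hin

theorem le_of_row_le (h : memGTdilate n k M y) {i j j' : ℕ} (hi : 1 ≤ i) (hij : i ≤ j)
    (hjj' : j ≤ j') (hj' : j' ≤ n) : y i j ≤ y i j' := by
  induction j', hjj' using Nat.le_induction with
  | base => exact le_rfl
  | succ j' hjj' ih => exact (ih (by omega)).trans (h.le_succ hi (by omega) (by omega))

theorem add_add_le (h : memGTdilate n k M y) {i j d : ℕ} (hi : 1 ≤ i) (hij : i ≤ j)
    (hd : j + d ≤ n) : y (i + d) (j + d) ≤ y i j := by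
  induction d with
  | zero => exact le_rfl
  | succ d ih =>
    exact (h.succ_succ_le (i := i + d) (j := j + d) (by omega) (by omega) (by omega)).trans
      (ih (by omega))

theorem eq_zero_of_four_le (h : memGTdilate n k M y) {i j : ℕ} (hi : 4 ≤ i) (hij : i ≤ j)
    (hj : j ≤ n) : y i j = 0 := by
  have hup := h.le_of_row_le (by omega) hij hj le_rfl
  have hdown := h.add_add_le (d := n - j) (by omega) hij (by omega)
  rw [show j + (n - j) = n by omega] at hdown
  rw [h.top_eq (by omega) (by omega), if_neg (by omega)] at hup
  rw [h.top_eq (by omega) (by omega), if_neg (by omega)] at hdown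
  exact le_antisymm hup hdown

theorem add_sum_Ioc_eq (h : memGTdilate n k M y) {j : ℕ} (hj : 1 ≤ j) (hjn : j ≤ n) :
    y 1 j + ∑ i ∈ Ioc 1 j, y i j = M * j := by
  rw [← h.2.2 j hj hjn, ← add_sum_Ioc_eq_sum_Icc hj]

theorem add_add_eq (h : memGTdilate n k M y) {j : ℕ} (hj : 3 ≤ j) (hjn : j ≤ n) :
    y 1 j + y 2 j + y 3 j = M * j := by
  have hIoc : Ioc 1 j = {2, 3} ∪ Ioc 3 j := by
    ext i; simp only [mem_Ioc, mem_union, mem_insert, mem_singleton]; omega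
  have hzero : ∑ i ∈ Ioc 3 j, y i j = 0 :=
    sum_eq_zero fun i hi => h.eq_zero_of_four_le (by simp at hi; omega) (mem_Ioc.1 hi).2 hjn
  have := h.add_sum_Ioc_eq (by omega) hjn
  rw [hIoc, sum_union (by simp), hzero, sum_pair (by norm_num)] at this
  linarith

theorem mem_denDvd_of_mem_denDvd_two_three (h : memGTdilate n k M y) {D : ℕ}
    (h₂ : ∀ j, 2 ≤ j → j ≤ n → y 2 j ∈ Rat.denDvd D)
    (h₃ : ∀ j, 3 ≤ j → j ≤ n → y 3 j ∈ Rat.denDvd D) {i j : ℕ} (hi : 1 ≤ i) (hij : i ≤ j)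
    (hj : j ≤ n) : y i j ∈ Rat.denDvd D := by
  have hlower : ∀ i, 2 ≤ i → i ≤ j → y i j ∈ Rat.denDvd D := by
    intro i hi hij
    rcases (show i = 2 ∨ i = 3 ∨ 4 ≤ i by omega) with rfl | rfl | hi4
    · exact h₂ j hij hj
    · exact h₃ j hij hj
    · rw [h.eq_zero_of_four_le hi4 hij hj]; exact zero_mem _
  rcases (show i = 1 ∨ 2 ≤ i by omega) with rfl | hi2
  · rw [show y 1 j = M * j - ∑ i ∈ Ioc 1 j, y i j by linarith [h.add_sum_Ioc_eq hij hj]]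
    refine sub_mem (by exact_mod_cast Rat.natCast_mem_denDvd (M * j) D) (sum_mem fun i hi' => ?_)
    exact hlower i (mem_Ioc.1 hi').1 (mem_Ioc.1 hi').2
  · exact hlower i hi2 hij

theorem one_sub_two_eq (h : memGTdilate n k M y) (hn : 3 ≤ n) : y 1 (n - 2) = M * k := by
  have top : ∀ i, 1 ≤ i → i ≤ 3 → y i n = M * k := fun i hi hi3 => by
    rw [h.top_eq hi (by omega), if_pos hi3]
  have e1 : n - 1 + 1 = n := by omega
  have e2 : n - 2 + 1 = n - 1 := by omega
  have h11 := h.le_succ (i := 1) (j := n - 1) le_rfl (by omega) (by omega)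
  have h21 := h.succ_succ_le (i := 1) (j := n - 1) le_rfl (by omega) (by omega)
  have h12 := h.le_succ (i := 2) (j := n - 1) (by omega) (by omega) (by omega)
  have h22 := h.succ_succ_le (i := 2) (j := n - 1) (by omega) (by omega) (by omega)
  have h13 := h.le_succ (i := 1) (j := n - 2) le_rfl (by omega) (by omega)
  have h23 := h.succ_succ_le (i := 1) (j := n - 2) le_rfl (by omega) (by omega)
  rw [e1] at h11 h21 h12 h22
  rw [e2] at h13 h23
  linarith [top 1 le_rfl (by omega), top 2 (by omega) (by omega), top 3 (by omega) le_rfl]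

theorem eq_succ_of_add_eq_mul {M₁ M₂ : ℕ} {y₁ y₂ x : ℕ → ℕ → ℚ} {c : ℚ}
    (h₁ : memGTdilate n k M₁ y₁) (h₂ : memGTdilate n k M₂ y₂)
    (hsum : ∀ i j, 1 ≤ i → i ≤ j → j ≤ n → y₁ i j + y₂ i j = c * x i j)
    {i j : ℕ} (hi : 1 ≤ i) (hij : i ≤ j) (hj : j < n) (hx : x i j = x i (j + 1)) :
    y₁ i j = y₁ i (j + 1) := by
  have e₁ := hsum i j hi hij hj.le
  have e₂ := hsum i (j + 1) hi (by omega) hj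
  rw [hx] at e₁
  linarith [h₁.le_succ hi hij hj, h₂.le_succ hi hij hj]

theorem eq_succ_succ_of_add_eq_mul {M₁ M₂ : ℕ} {y₁ y₂ x : ℕ → ℕ → ℚ} {c : ℚ}
    (h₁ : memGTdilate n k M₁ y₁) (h₂ : memGTdilate n k M₂ y₂)
    (hsum : ∀ i j, 1 ≤ i → i ≤ j → j ≤ n → y₁ i j + y₂ i j = c * x i j)
    {i j : ℕ} (hi : 1 ≤ i) (hij : i ≤ j) (hj : j < n) (hx : x i j = x (i + 1) (j + 1)) :
    y₁ i j = y₁ (i + 1) (j + 1) := by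
  have e₁ := hsum i j hi hij hj.le
  have e₂ := hsum (i + 1) (j + 1) (by omega) (by omega) hj
  rw [hx] at e₁
  linarith [h₁.succ_succ_le hi hij hj, h₂.succ_succ_le hi hij hj]

theorem eq_mul_of_chain (h : memGTdilate n k M y) {N : ℕ} {T : ℕ → ℚ} (hNn : 2 * N + 4 ≤ n)
    (hrec : ∀ j : ℕ, 2 * T (j + 1) + T j = n - 2 * j - 3)
    (h₀ : y 1 (n - 3) = M * T 0)
    (hA : ∀ j, 1 ≤ j → j ≤ N →
      y 2 (n - 2 * j - 1) = y 3 (n - 2 * j) ∧ y 3 (n - 2 * j - 1) = y 3 (n - 2 * j))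
    (hB : ∀ j, 1 ≤ j → j < N →
      y 1 (n - 2 * j - 3) = y 2 (n - 2 * j - 2) ∧ y 2 (n - 2 * j - 2) = y 2 (n - 2 * j - 1))
    {j : ℕ} (hj : 1 ≤ j) (hjN : j ≤ N) : y 3 (n - 2 * j) = M * T j := by
  have step : ∀ j, j < N → y 1 (n - 2 * j - 3) = M * T j →
      y 3 (n - 2 * (j + 1)) = M * T (j + 1) := by
    intro j hj hy
    obtain ⟨h₂, h₃⟩ := hA (j + 1) (by omega) (by omega)
    have hrow := h.add_add_eq (j := n - 2 * j - 3) (by omega) (by omega)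
    rw [show n - 2 * (j + 1) - 1 = n - 2 * j - 3 by omega] at h₂ h₃
    have hr : ((n - 2 * j - 3 : ℕ) : ℚ) = n - 2 * j - 3 := by
      rw [Nat.sub_sub, Nat.cast_sub (by omega)]; push_cast; ring
    rw [h₂, h₃, hy, hr] at hrow
    -- the row sum of row `n - 2j - 3` is `M` times the recurrence of `T`
    linear_combination hrow / 2 - M * hrec j / 2
  have hfirst : ∀ j, j < N → y 1 (n - 2 * j - 3) = M * T j := by
    intro j
    induction j with
    | zero => intro _; simpa using h₀
    | succ j ih =>
      intro hj
      obtain ⟨hB₁, hB₂⟩ := hB (j + 1) (by omega) hj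
      rw [hB₁, hB₂, (hA (j + 1) (by omega) hj.le).1, step j (by omega) (ih (by omega))]
  obtain ⟨j, rfl⟩ : ∃ j', j = j' + 1 := ⟨j - 1, by omega⟩
  exact step j (by omega) (hfirst j (by omega))

theorem den_dvd_of_add_eq_mul {M₁ M₂ N : ℕ} {y₁ y₂ x : ℕ → ℕ → ℚ} {c : ℚ} {T : ℕ → ℚ}
    (h₁ : memGTdilate n k M₁ y₁) (h₂ : memGTdilate n k M₂ y₂)
    (hsum : ∀ i j, 1 ≤ i → i ≤ j → j ≤ n → y₁ i j + y₂ i j = c * x i j)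
    (hN : 1 ≤ N) (hNn : 2 * N + 4 ≤ n)
    (hrec : ∀ j : ℕ, 2 * T (j + 1) + T j = n - 2 * j - 3) (hT₀ : T 0 = k)
    (hx₀ : x 1 (n - 3) = x 1 (n - 2))
    (hA : ∀ j, 1 ≤ j → j ≤ N →
      x 2 (n - 2 * j - 1) = x 3 (n - 2 * j) ∧ x 3 (n - 2 * j - 1) = x 3 (n - 2 * j))
    (hB : ∀ j, 1 ≤ j → j < N →
      x 1 (n - 2 * j - 3) = x 2 (n - 2 * j - 2) ∧ x 2 (n - 2 * j - 2) = x 2 (n - 2 * j - 1))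
    (hint : ∃ z : ℤ, y₁ 2 (n - 2 * N - 1) = z) : (T N).den ∣ M₁ := by
  have vert : ∀ i r, 1 ≤ i → i ≤ r → r < n → x i r = x i (r + 1) → y₁ i r = y₁ i (r + 1) :=
    fun i r hi hir hr hx => eq_succ_of_add_eq_mul h₁ h₂ hsum hi hir hr hx
  have diag : ∀ i r, 1 ≤ i → i ≤ r → r < n → x i r = x (i + 1) (r + 1) →
      y₁ i r = y₁ (i + 1) (r + 1) :=
    fun i r hi hir hr hx => eq_succ_succ_of_add_eq_mul h₁ h₂ hsum hi hir hr hx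
  have hy₀ : y₁ 1 (n - 3) = M₁ * T 0 := by
    rw [hT₀, ← h₁.one_sub_two_eq (by omega), show n - 2 = n - 3 + 1 by omega]
    exact vert 1 (n - 3) le_rfl (by omega) (by omega) (by rwa [show n - 3 + 1 = n - 2 by omega])
  have hA' : ∀ j, 1 ≤ j → j ≤ N →
      y₁ 2 (n - 2 * j - 1) = y₁ 3 (n - 2 * j) ∧ y₁ 3 (n - 2 * j - 1) = y₁ 3 (n - 2 * j) := by
    intro j hj hjN
    obtain ⟨hx₂, hx₃⟩ := hA j hj hjN
    rw [show n - 2 * j = n - 2 * j - 1 + 1 by omega] at hx₂ hx₃ ⊢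
    exact ⟨diag 2 _ (by omega) (by omega) (by omega) hx₂,
      vert 3 _ (by omega) (by omega) (by omega) hx₃⟩
  have hB' : ∀ j, 1 ≤ j → j < N →
      y₁ 1 (n - 2 * j - 3) = y₁ 2 (n - 2 * j - 2) ∧ y₁ 2 (n - 2 * j - 2) = y₁ 2 (n - 2 * j - 1) := by
    intro j hj hjN
    obtain ⟨hx₁, hx₂⟩ := hB j hj hjN
    rw [show n - 2 * j - 1 = n - 2 * j - 2 + 1 by omega] at hx₂ ⊢
    rw [show n - 2 * j - 2 = n - 2 * j - 3 + 1 by omega] at hx₁ hx₂ ⊢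
    exact ⟨diag 1 _ le_rfl (by omega) (by omega) hx₁,
      vert 2 _ (by omega) (by omega) (by omega) hx₂⟩
  obtain ⟨z, hz⟩ := hint
  rw [(hA' N hN le_rfl).1, h₁.eq_mul_of_chain hNn hrec hy₀ hA' hB' hN le_rfl] at hz
  exact Rat.exists_mul_eq_intCast_iff_den_dvd.1 ⟨z, hz⟩

end memGTdilate

structure IsTVertex (k n N : ℕ) (T1 T2 : ℕ → ℚ) (x : ℕ → ℕ → ℚ) : Prop where
  two_le : 2 ≤ k
  n_eq : n = 3 * k
  N_eq : N = k + k / 2 - 2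
  mem : memGTdilate n k 1 x
  row_one : x 2 (n - 1) = k ∧ x 3 (n - 1) = k - 1
  row_two : x 1 (n - 2) = k ∧ x 2 (n - 2) = k - 1/2
  row_three : x 1 (n - 3) = k
  block : ∀ j : ℕ, 1 ≤ j → j ≤ N - 1 →
    x 3 (n - 2*j) = T1 j ∧
    x 2 (n - 2*j - 1) = T1 j ∧ x 3 (n - 2*j - 1) = T1 j ∧
    x 1 (n - 2*j - 2) = T2 j ∧ x 2 (n - 2*j - 2) = T1 j ∧
    x 1 (n - 2*j - 3) = T1 j
  even : Even k →
    x 3 4 = T1 N ∧ x 2 3 = T1 N ∧ x 3 3 = T1 N ∧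
    x 1 2 = 2 - T1 N ∧ x 2 2 = T1 N ∧ x 1 1 = 1
  odd : Odd k →
    x 3 5 = T1 N ∧ x 2 4 = T1 N ∧ x 3 4 = T1 N ∧
    x 1 3 = T1 N ∧ x 2 3 = T1 N ∧ x 3 3 = 3 - 2 * T1 N ∧
    x 1 2 = T1 N ∧ x 2 2 = 2 - T1 N ∧ x 1 1 = 1

namespace IsTVertex

variable {k n N : ℕ} {T1 T2 : ℕ → ℚ} {x : ℕ → ℕ → ℚ}

theorem one_le (hv : IsTVertex k n N T1 T2 x) : 1 ≤ N := by
  have := hv.two_le; have := hv.N_eq; omega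

theorem two_mul_add_four_le (hv : IsTVertex k n N T1 T2 x) : 2 * N + 4 ≤ n := by
  have := hv.two_le; have := hv.n_eq; have := hv.N_eq; omega

theorem chain (hv : IsTVertex k n N T1 T2 x) {j : ℕ} (hj : 1 ≤ j) (hjN : j ≤ N) :
    x 3 (n - 2 * j) = T1 j ∧ x 2 (n - 2 * j - 1) = T1 j ∧ x 3 (n - 2 * j - 1) = T1 j := by
  rcases hjN.lt_or_eq with hjN | rfl
  · obtain ⟨h₁, h₂, h₃, -⟩ := hv.block j hj (by omega)
    exact ⟨h₁, h₂, h₃⟩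
  have := hv.n_eq; have := hv.N_eq
  rcases Nat.even_or_odd k with he | ho
  · obtain ⟨h₁, h₂, h₃, -⟩ := hv.even he
    obtain ⟨c, rfl⟩ := he
    rw [show n - 2 * j = 4 by omega]
    exact ⟨h₁, h₂, h₃⟩
  · obtain ⟨h₁, h₂, h₃, -⟩ := hv.odd ho
    obtain ⟨c, rfl⟩ := ho
    rw [show n - 2 * j = 5 by omega]
    exact ⟨h₁, h₂, h₃⟩

theorem mem_denDvd_below_chain (hv : IsTVertex k n N T1 T2 x) (hT : T1 N ∈ Rat.denDvd (2 ^ N))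
    {j : ℕ} (hj : 2 ≤ j) (hjN : j + 2 * N + 2 ≤ n) :
    x 2 j ∈ Rat.denDvd (2 ^ N) ∧ (3 ≤ j → x 3 j ∈ Rat.denDvd (2 ^ N)) := by
  have := hv.n_eq; have := hv.N_eq
  have hsub : ∀ a : ℕ, ∀ b : ℕ, (a : ℚ) - b * T1 N ∈ Rat.denDvd (2 ^ N) := fun a b =>
    sub_mem (Rat.natCast_mem_denDvd a _) (by simpa using nsmul_mem hT b)
  rcases Nat.even_or_odd k with he | ho
  · obtain ⟨-, -, -, -, h₂₂, -⟩ := hv.even he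
    obtain ⟨c, rfl⟩ := he
    obtain rfl : j = 2 := by omega
    exact ⟨h₂₂ ▸ hT, by omega⟩
  · obtain ⟨-, -, -, -, h₂₃, h₃₃, -, h₂₂, -⟩ := hv.odd ho
    obtain ⟨c, rfl⟩ := ho
    rcases (show j = 2 ∨ j = 3 by omega) with rfl | rfl
    · exact ⟨h₂₂ ▸ by simpa using hsub 2 1, by omega⟩
    · exact ⟨h₂₃ ▸ hT, fun _ => h₃₃ ▸ by simpa using hsub 3 2⟩

theorem mem_denDvd_two (hv : IsTVertex k n N T1 T2 x)
    (hT : ∀ m ≤ N, T1 m ∈ Rat.denDvd (2 ^ N)) {j : ℕ} (hj : 2 ≤ j) (hjn : j ≤ n) :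
    x 2 j ∈ Rat.denDvd (2 ^ N) := by
  have := hv.two_mul_add_four_le
  obtain ⟨r, rfl⟩ : ∃ r, j = n - r := ⟨n - j, by omega⟩
  rcases (show r ≤ 2 ∨ (3 ≤ r ∧ r ≤ 2 * N + 1) ∨ 2 * N + 2 ≤ r by omega) with
    hr | ⟨hr₁, hr₂⟩ | hr
  · interval_cases r
    · rw [Nat.sub_zero, hv.mem.top_eq (by omega) (by omega), if_pos (by omega), Nat.cast_one, one_mul]
      exact Rat.natCast_mem_denDvd k _
    · exact hv.row_one.1 ▸ Rat.natCast_mem_denDvd k _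
    · rw [hv.row_two.2, Rat.mem_denDvd, Rat.natCast_sub_den]
      exact (show ((1 : ℚ) / 2).den = 2 ^ 1 by norm_num).symm ▸ pow_dvd_pow 2 hv.one_le
  · obtain ⟨m, rfl | rfl⟩ := Nat.even_or_odd' r
    · rw [show n - 2 * m = n - 2 * (m - 1) - 2 by omega,
        (hv.block (m - 1) (by omega) (by omega)).2.2.2.2.1]
      exact hT _ (by omega)
    · rw [← Nat.sub_sub, (hv.chain (by omega) (by omega)).2.1]
      exact hT _ (by omega)
  · exact (hv.mem_denDvd_below_chain (hT N le_rfl) hj (by omega)).1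

theorem mem_denDvd_three (hv : IsTVertex k n N T1 T2 x)
    (hT : ∀ m ≤ N, T1 m ∈ Rat.denDvd (2 ^ N)) {j : ℕ} (hj : 3 ≤ j) (hjn : j ≤ n) :
    x 3 j ∈ Rat.denDvd (2 ^ N) := by
  have := hv.two_mul_add_four_le
  obtain ⟨r, rfl⟩ : ∃ r, j = n - r := ⟨n - j, by omega⟩
  rcases (show r ≤ 1 ∨ (2 ≤ r ∧ r ≤ 2 * N + 1) ∨ 2 * N + 2 ≤ r by omega) with
    hr | ⟨hr₁, hr₂⟩ | hr
  · interval_cases r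
    · rw [Nat.sub_zero, hv.mem.top_eq (by omega) (by omega), if_pos le_rfl, Nat.cast_one, one_mul]
      exact Rat.natCast_mem_denDvd k _
    · rw [hv.row_one.2]
      exact_mod_cast Rat.intCast_mem_denDvd (k - 1) _
  · obtain ⟨m, rfl | rfl⟩ := Nat.even_or_odd' r
    · rw [(hv.chain (by omega) (by omega)).1]
      exact hT _ (by omega)
    · rw [← Nat.sub_sub, (hv.chain (by omega) (by omega)).2.2]
      exact hT _ (by omega)
  · exact (hv.mem_denDvd_below_chain (hT N le_rfl) (by omega) (by omega)).2 hj

theorem den_dvd_of_add_eq_mul (hv : IsTVertex k n N T1 T2 x) {M₁ M₂ : ℕ}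
    {y₁ y₂ : ℕ → ℕ → ℚ} {c : ℚ} (h₁ : memGTdilate n k M₁ y₁) (h₂ : memGTdilate n k M₂ y₂)
    (hsum : ∀ i j, 1 ≤ i → i ≤ j → j ≤ n → y₁ i j + y₂ i j = c * x i j)
    (hrec : ∀ j : ℕ, 2 * T1 (j + 1) + T1 j = n - 2 * j - 3) (hT₀ : T1 0 = k)
    (hint : ∃ z : ℤ, y₁ 2 (n - 2 * N - 1) = z) : (T1 N).den ∣ M₁ := by
  refine h₁.den_dvd_of_add_eq_mul h₂ hsum hv.one_le hv.two_mul_add_four_le hrec hT₀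
    (hv.row_three.trans hv.row_two.1.symm) (fun j hj hjN => ?_) (fun j hj hjN => ?_) hint
  · obtain ⟨h₃, h₂, h₃'⟩ := hv.chain hj hjN
    exact ⟨h₂.trans h₃.symm, h₃'.trans h₃.symm⟩
  · obtain ⟨-, h₂, -, -, h₂', h₁⟩ := hv.block j hj (by omega)
    exact ⟨h₁.trans h₂'.symm, h₂'.trans h₂.symm⟩

end IsTVertex

theorem two_rpow_lt_two_pow {k : ℕ} (hk : 2 ≤ k) :
    (2 : ℝ) ^ (((3 * k : ℕ) : ℝ) / 2 - 3) < 2 ^ (k + k / 2 - 2) := by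
  rw [← Real.rpow_natCast, Real.rpow_lt_rpow_left_iff (by norm_num)]
  have h₁ : ((k + k / 2 - 2 : ℕ) : ℝ) = k + (k / 2 : ℕ) - 2 := by
    rw [Nat.cast_sub (by omega)]; push_cast; ring
  have h₂ : (k : ℝ) ≤ 2 * (k / 2 : ℕ) + 1 := by exact_mod_cast (by omega : k ≤ 2 * (k / 2) + 1)
  rw [h₁]; push_cast; linarith

theorem gt_pattern_denominator_and_essential_general (k n N : ℕ) (hk : 2 ≤ k) (hn : n = 3 * k)
    (hN : N = k + k / 2 - 2)
    (T1 T2 : ℕ → ℚ)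
    (hT1 : ∀ i : ℕ, T1 i = (k : ℚ) - (2/3) * i + (5/9) * (-1/2 : ℚ) ^ i - 5/9)
    (x : ℕ → ℕ → ℚ)
    (hxGT : memGTdilate n k 1 x)
    (hrow1 : x 1 (n - 1) = k ∧ x 2 (n - 1) = k ∧ x 3 (n - 1) = k - 1)
    (hrow2 : x 1 (n - 2) = k ∧ x 2 (n - 2) = k - 1/2)
    (hrow3 : x 1 (n - 3) = k)
    (hblock : ∀ j : ℕ, 1 ≤ j → j ≤ N - 1 →
      x 3 (n - 2*j) = T1 j ∧
      x 2 (n - 2*j - 1) = T1 j ∧ x 3 (n - 2*j - 1) = T1 j ∧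
      x 1 (n - 2*j - 2) = T2 j ∧ x 2 (n - 2*j - 2) = T1 j ∧
      x 1 (n - 2*j - 3) = T1 j)
    (heven : Even k →
      x 3 4 = T1 N ∧ x 2 3 = T1 N ∧ x 3 3 = T1 N ∧
      x 1 2 = 2 - T1 N ∧ x 2 2 = T1 N ∧ x 1 1 = 1)
    (hodd : Odd k →
      x 3 5 = T1 N ∧ x 2 4 = T1 N ∧ x 3 4 = T1 N ∧
      x 1 3 = T1 N ∧ x 2 3 = T1 N ∧ x 3 3 = 3 - 2 * T1 N ∧
      x 1 2 = T1 N ∧ x 2 2 = 2 - T1 N ∧ x 1 1 = 1) :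
    -- `x` has denominator exactly `2^N`:
    IsLeast {d : ℕ | 0 < d ∧ ∀ i j : ℕ, 1 ≤ i → i ≤ j → j ≤ n →
        ∃ z : ℤ, (d : ℚ) * x i j = z} (2 ^ N) ∧
    -- `(2^N, 2^N · x)` is an essential generator of the graded semigroup:
    (¬ ∃ (M₁ M₂ : ℕ) (y₁ y₂ : ℕ → ℕ → ℚ),
        0 < M₁ ∧ 0 < M₂ ∧ M₁ + M₂ = 2 ^ N ∧
        memGTdilate n k M₁ y₁ ∧ memGTdilate n k M₂ y₂ ∧
        (∀ i j : ℕ, 1 ≤ i → i ≤ j → j ≤ n →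
          (∃ z : ℤ, y₁ i j = z) ∧ (∃ z : ℤ, y₂ i j = z)) ∧
        (∀ i j : ℕ, 1 ≤ i → i ≤ j → j ≤ n →
          y₁ i j + y₂ i j = (2 ^ N : ℚ) * x i j)) ∧
    -- the degree of this essential generator exceeds `2^(n/2 - 3)`:
    ((2 : ℝ) ^ (N : ℕ) > (2 : ℝ) ^ ((n : ℝ) / 2 - 3)) := by
  have hv : IsTVertex k n N T1 T2 x :=
    ⟨hk, hn, hN, hxGT, hrow1.2, hrow2, hrow3, hblock, heven, hodd⟩
  have hT₀ : T1 0 = k := by rw [hT1]; norm_num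
  have hrec : ∀ j : ℕ, 2 * T1 (j + 1) + T1 j = n - 2 * j - 3 := fun j => by
    rw [hT1, hT1, hn]; push_cast; ring
  have hden : ∀ j, 1 ≤ j → (T1 j).den = 2 ^ j := fun j =>
    Rat.den_eq_two_pow_of_two_mul_add_eq_intCast
      (by rw [show T1 1 = (k : ℚ) - 3 / 2 by rw [hT1]; ring, Rat.natCast_sub_den]; norm_num)
      (fun j => ⟨n - 2 * j - 3, by rw [hrec]; push_cast; ring⟩)
  have hT : ∀ m ≤ N, T1 m ∈ Rat.denDvd (2 ^ N) := fun m hm => by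
    rcases m.eq_zero_or_pos with rfl | hm₀
    · exact hT₀ ▸ Rat.natCast_mem_denDvd k _
    · rw [Rat.mem_denDvd, hden m hm₀]; exact pow_dvd_pow 2 hm
  have hx_den : (x 2 (n - 2 * N - 1)).den = 2 ^ N := by
    rw [(hv.chain hv.one_le le_rfl).2.1, hden N hv.one_le]
  have hNn := hv.two_mul_add_four_le
  refine ⟨⟨⟨by positivity, fun i j hi hij hj => ?_⟩, fun d ⟨hd, hdx⟩ => ?_⟩, ?_, ?_⟩
  · exact Rat.exists_mul_eq_intCast_iff_den_dvd.2 <| hv.mem.mem_denDvd_of_mem_denDvd_two_three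
      (fun _ => hv.mem_denDvd_two hT) (fun _ => hv.mem_denDvd_three hT) hi hij hj
  · exact Nat.le_of_dvd hd
      (hx_den ▸ Rat.exists_mul_eq_intCast_iff_den_dvd.1 (hdx 2 _ (by omega) (by omega) (by omega)))
  · rintro ⟨M₁, M₂, y₁, y₂, hM₁, hM₂, hM, h₁, h₂, hint, hsum⟩
    have hdvd := hden N hv.one_le ▸ hv.den_dvd_of_add_eq_mul h₁ h₂ hsum hrec hT₀
      (hint 2 _ (by omega) (by omega) (by omega)).1
    have := Nat.le_of_dvd hM₁ hdvd
    omega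
  · subst hn hN
    exact two_rpow_lt_two_pow hk

/-- The vertex `x` of `GT(k·ϖ₃, (1,…,1))` built from `T1`, `T2` has denominator
exactly `2^N` where `N = k + ⌊k/2⌋ - 2`; consequently the integral point `2^N · x`
is an essential generator of degree `2^N` of the graded semigroup of integral
GT patterns (it is not a sum of two nonzero elements), and `2^N > 2^(n/2 - 3)`. -/
theorem gt_pattern_denominator_and_essential (k n N : ℕ) (hk : 2 ≤ k) (hn : n = 3 * k)
    (hN : N = k + k / 2 - 2)
    (T1 T2 : ℕ → ℚ)
    (hT1 : ∀ i : ℕ, T1 i = (k : ℚ) - (2/3) * i + (5/9) * (-1/2 : ℚ) ^ i - 5/9)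
    (hT2 : ∀ i : ℕ, T2 i = (k : ℚ) - (2/3) * i - (5/18) * (-1/2 : ℚ) ^ i - 2/9)
    (x : ℕ → ℕ → ℚ)
    (hxGT : memGTdilate n k 1 x)
    (htop : x 1 n = k ∧ x 2 n = k ∧ x 3 n = k)
    (hrow1 : x 1 (n - 1) = k ∧ x 2 (n - 1) = k ∧ x 3 (n - 1) = k - 1)
    (hrow2 : x 1 (n - 2) = k ∧ x 2 (n - 2) = k - 1/2)
    (hrow3 : x 1 (n - 3) = k)
    (hblock : ∀ j : ℕ, 1 ≤ j → j ≤ N - 1 →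
      x 3 (n - 2*j) = T1 j ∧
      x 2 (n - 2*j - 1) = T1 j ∧ x 3 (n - 2*j - 1) = T1 j ∧
      x 1 (n - 2*j - 2) = T2 j ∧ x 2 (n - 2*j - 2) = T1 j ∧
      x 1 (n - 2*j - 3) = T1 j)
    (heven : Even k →
      x 3 4 = T1 N ∧ x 2 3 = T1 N ∧ x 3 3 = T1 N ∧
      x 1 2 = 2 - T1 N ∧ x 2 2 = T1 N ∧ x 1 1 = 1)
    (hodd : Odd k →
      x 3 5 = T1 N ∧ x 2 4 = T1 N ∧ x 3 4 = T1 N ∧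
      x 1 3 = T1 N ∧ x 2 3 = T1 N ∧ x 3 3 = 3 - 2 * T1 N ∧
      x 1 2 = T1 N ∧ x 2 2 = 2 - T1 N ∧ x 1 1 = 1)
    (hzero : ∀ i j : ℕ, 4 ≤ i → i ≤ j → j ≤ n → x i j = 0) :
    -- `x` has denominator exactly `2^N`:
    IsLeast {d : ℕ | 0 < d ∧ ∀ i j : ℕ, 1 ≤ i → i ≤ j → j ≤ n →
        ∃ z : ℤ, (d : ℚ) * x i j = z} (2 ^ N) ∧
    -- `(2^N, 2^N · x)` is an essential generator of the graded semigroup: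
    (¬ ∃ (M₁ M₂ : ℕ) (y₁ y₂ : ℕ → ℕ → ℚ),
        0 < M₁ ∧ 0 < M₂ ∧ M₁ + M₂ = 2 ^ N ∧
        memGTdilate n k M₁ y₁ ∧ memGTdilate n k M₂ y₂ ∧
        (∀ i j : ℕ, 1 ≤ i → i ≤ j → j ≤ n →
          (∃ z : ℤ, y₁ i j = z) ∧ (∃ z : ℤ, y₂ i j = z)) ∧
        (∀ i j : ℕ, 1 ≤ i → i ≤ j → j ≤ n →
          y₁ i j + y₂ i j = (2 ^ N : ℚ) * x i j)) ∧
    -- the degree of this essential generator exceeds `2^(n/2 - 3)`: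
    ((2 : ℝ) ^ (N : ℕ) > (2 : ℝ) ^ ((n : ℝ) / 2 - 3)) :=
  gt_pattern_denominator_and_essential_general k n N hk hn hN T1 T2 hT1 x hxGT hrow1 hrow2 hrow3
    hblock heven hodd
end
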